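/- Let κ ∈ {1, −1}. Let V be a complex vector space with a Hermitian sesquilinear form B : V × V → ℂ (conjugate-linear in the first argument, linear in the second, and B(y, x) = conj(B(x, y)) for all x, y), and let u : V → V be a conjugate linear involution (ℝ-linear, u(c • x) = conj(c) • u(x), u ∘ u = id). For ξ₁, …, ξ_{2n} ∈ V define ρ(ξ₁, …, ξ_{2n}) := (1/n!) · Σ_{σ ∈ S_{2n}} κ^{|σ|} · Π_{j=1}^{n} B(ξ_{σ(j)}, u(ξ_{σ(2n+1−j)})), where κ^{|σ|} is the sign of σ if κ = −1 and 1 if κ = 1. Then ρ(u(ξ_{2n}), u(ξ_{2n−1}), …, u(ξ₁)) = conj(ρ(ξ₁, …, ξ_{2n})). -/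
import Mathlib


/-- `κ^{|σ|}`: the sign of the permutation `σ` if `κ = -1`, and `1` if `κ = 1`. -/
noncomputable def ksgn (κ : ℂ) {n : ℕ} (σ : Equiv.Perm (Fin n)) : ℂ :=
  if κ = -1 then ((Equiv.Perm.sign σ : ℤ) : ℂ) else 1

/-- The free-field amplitude of a generating state, written using the complex conjugation
`u`: `ρ(ξ₁, …, ξ_{2n}) = (1/n!) Σ_{σ ∈ S_{2n}} κ^{|σ|} Π_{j=1}^{n}
B (ξ_{σ(j)}) (u (ξ_{σ(2n+1-j)}))`. -/
noncomputable def rho (κ : ℂ) {V : Type*} [AddCommGroup V] [Module ℂ V]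
    (B : V →ₛₗ[starRingEnd ℂ] V →ₗ[ℂ] ℂ) (u : V →ₛₗ[starRingEnd ℂ] V)
    (n : ℕ) (ξ : Fin (2 * n) → V) : ℂ :=
  (n.factorial : ℂ)⁻¹ * ∑ σ : Equiv.Perm (Fin (2 * n)), ksgn κ σ *
    ∏ j : Fin n,
      B (ξ (σ (Fin.castLE (by omega) j))) (u (ξ (σ (Fin.castLE (by omega : n ≤ 2 * n) j).rev)))

/-- The amplitude map commutes with the complex conjugation induced
by `u`: `ρ (u ξ_{2n}, …, u ξ₁) = conj (ρ (ξ₁, …, ξ_{2n}))` when `B` is Hermitian and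
`u` is a conjugate linear involution. -/
theorem stmt_11 {V : Type*} [AddCommGroup V] [Module ℂ V]
    (κ : ℂ) (hκ : κ = 1 ∨ κ = -1)
    (B : V →ₛₗ[starRingEnd ℂ] V →ₗ[ℂ] ℂ)
    (hherm : ∀ x y, B y x = starRingEnd ℂ (B x y))
    (u : V →ₛₗ[starRingEnd ℂ] V) (hu2 : ∀ x, u (u x) = x)
    (n : ℕ) (ξ : Fin (2 * n) → V) :
    rho κ B u n (fun i => u (ξ i.rev)) = starRingEnd ℂ (rho κ B u n ξ) := by
  unfold rho
  rw [map_mul, map_sum, map_inv₀, Complex.conj_natCast]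
  congr 1
  refine Fintype.sum_equiv
    ((Equiv.mulLeft (Fin.revPerm : Equiv.Perm (Fin (2 * n)))).trans
      (Equiv.mulRight (Fin.revPerm : Equiv.Perm (Fin (2 * n))))) _ _ fun σ => ?_
  rw [map_mul, map_prod]
  congr 1
  · -- signs
    simp only [Equiv.trans_apply, Equiv.coe_mulLeft, Equiv.coe_mulRight]
    have hsgn : Equiv.Perm.sign (Fin.revPerm * σ * Fin.revPerm) = Equiv.Perm.sign σ := by
      rw [map_mul, map_mul]
      rcases Int.units_eq_one_or (Equiv.Perm.sign (Fin.revPerm : Equiv.Perm (Fin (2 * n))))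
        with h | h <;> simp [h]
    rcases hκ with h | h <;>
      simp [ksgn, h, hsgn, if_neg (by norm_num : (1 : ℂ) ≠ -1)]
  · refine Finset.prod_congr rfl fun j _ => ?_
    rw [← hherm]
    simp only [Equiv.trans_apply, Equiv.coe_mulLeft, Equiv.coe_mulRight,
      Equiv.Perm.mul_apply, Fin.revPerm_apply, Fin.rev_rev, hu2]
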